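/- arXiv:2101.11166 — 3 statements merged into one kernel-verified Lean document; each statement's English description precedes it below -/
import Mathlib

section
/- For any convex function f: Rⁿ → R and random vector w with rate function ρ, and any γ > 0, the bound (1/γ) sup_z (γ f(z) − ρ(z)) ≤ R_γ(f(w)) holds. -/
/-!
Fix `z` and let `y` be a subgradient of the convex function `γ f` at `z` (it exists by
Hahn–Banach, separating `(z, γ f(z))` from the open strict epigraph), so that
`γ f(w) ≥ γ f(z) + ⟪w - z, y⟫` pointwise. Exponentiating and integrating gives
`log E[exp(γ f(w))] ≥ γ f(z) - ⟪z, y⟫ + c(y) ≥ γ f(z) - ρ(z)`, the last step because `ρ(z)` is the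
supremum of `⟪z, y⟫ - c(y)` over `y`. Taking the supremum over `z` and dividing by `γ` gives the
bound.
-/

open MeasureTheory Real

theorem ConvexOn.exists_subgradient {E : Type*} [TopologicalSpace E] [AddCommGroup E]
    [IsTopologicalAddGroup E] [Module ℝ E] [ContinuousSMul ℝ E] {f : E → ℝ}
    (hf : ConvexOn ℝ Set.univ f) (hfc : Continuous f) (z : E) :
    ∃ l : StrongDual ℝ E, ∀ x, f z + l (x - z) ≤ f x := by
  set s : Set (E × ℝ) := {p | p.1 ∈ Set.univ ∧ f p.1 < p.2}
  have hs : IsOpen s := by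
    simp only [s, Set.mem_univ, true_and]
    exact isOpen_lt (hfc.comp continuous_fst) continuous_snd
  obtain ⟨L, hL⟩ :=
    geometric_hahn_banach_point_open hf.convex_strict_epigraph hs (by simp [s] : (z, f z) ∉ s)
  have hdecomp : ∀ x t, L (x, t) = L (x, 0) + t * L (0, 1) := fun x t => by
    rw [← smul_eq_mul, ← map_smul, ← map_add, Prod.smul_mk, smul_zero, smul_eq_mul, mul_one,
      Prod.mk_add_mk, add_zero, zero_add]
  set β := L (0, 1)
  have hβ : 0 < β := by
    have := hL (z, f z + 1) (by simp)
    rw [hdecomp z (f z), hdecomp z (f z + 1)] at this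
    linarith
  refine ⟨-β⁻¹ • L.comp (.inl ℝ E ℝ), fun x => le_of_forall_gt_imp_ge_of_dense fun t ht => ?_⟩
  have hsep := hL (x, t) (by simpa [s])
  rw [hdecomp z (f z), hdecomp x t] at hsep
  have hLsub : L (x - z, 0) = L (x, 0) - L (z, 0) := by
    rw [← map_sub, Prod.mk_sub_mk, sub_zero]
  simp only [smul_apply, ContinuousLinearMap.comp_apply,
    ContinuousLinearMap.inl_apply, hLsub, smul_eq_mul]
  rw [neg_mul, ← sub_eq_add_neg, sub_le_comm, le_inv_mul_iff₀ hβ]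
  linarith

theorem StrongDual.apply_eq_sum_mul_apply_single {ι : Type*} [Fintype ι] [DecidableEq ι]
    (l : StrongDual ℝ (ι → ℝ)) (x : ι → ℝ) :
    l x = ∑ i, x i * l (Pi.single i 1) := by
  conv_lhs => rw [pi_eq_sum_univ' x]
  simp only [map_sum, map_smul, smul_eq_mul]

theorem add_log_integral_exp_le {Ω : Type*} [MeasurableSpace Ω] {μ : Measure Ω} [NeZero μ]
    {g h : Ω → ℝ} {a : ℝ} (hh : Integrable (fun ω => exp (h ω)) μ)
    (hg : Integrable (fun ω => exp (g ω)) μ) (hle : ∀ᵐ ω ∂μ, a + h ω ≤ g ω) :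
    a + log (∫ ω, exp (h ω) ∂μ) ≤ log (∫ ω, exp (g ω) ∂μ) := by
  have hah : Integrable (fun ω => exp (a + h ω)) μ := by
    simpa only [exp_add] using hh.const_mul (exp a)
  calc a + log (∫ ω, exp (h ω) ∂μ) = log (∫ ω, exp (a + h ω) ∂μ) := by
        simp only [exp_add, integral_const_mul]
        rw [log_mul (exp_pos a).ne' (integral_exp_pos hh).ne', log_exp]
    _ ≤ log (∫ ω, exp (g ω) ∂μ) := by
        refine log_le_log (integral_exp_pos hah) (integral_mono_ae hah hg ?_)
        filter_upwards [hle] with ω hω using exp_le_exp.2 hω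

/-- For convex f and γ > 0, (1/γ) sup_z (γ f(z) − ρ(z)) ≤ R_γ(f(w)). -/
theorem risk_bound_convex {Ω : Type*} [MeasurableSpace Ω]
    (μ : Measure Ω) [IsProbabilityMeasure μ] {n : ℕ}
    (w : Ω → Fin n → ℝ)
    (c : (Fin n → ℝ) → ℝ) (ρ : (Fin n → ℝ) → ℝ)
    (f : (Fin n → ℝ) → ℝ) (γ : ℝ) (hγ : 0 < γ)
    (hf : ConvexOn ℝ Set.univ f)
    (hint : ∀ y : Fin n → ℝ,
      Integrable (fun ω => Real.exp (∑ i, w ω i * y i)) μ)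
    (hc : ∀ y, c y = Real.log (∫ ω, Real.exp (∑ i, w ω i * y i) ∂μ))
    (hρ : ∀ x, IsLUB {r : ℝ | ∃ y : Fin n → ℝ, r = ∑ i, x i * y i - c y} (ρ x))
    (hfint : Integrable (fun ω => Real.exp (γ * f (w ω))) μ) :
    (1 / γ) * (⨆ z : Fin n → ℝ, (γ * f z - ρ z))
      ≤ (1 / γ) * Real.log (∫ ω, Real.exp (γ * f (w ω)) ∂μ) := by
  refine mul_le_mul_of_nonneg_left (ciSup_le fun z => ?_) (by positivity)
  have hfc : Continuous f := continuousOn_univ.mp (hf.continuousOn isOpen_univ)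
  obtain ⟨l, hl⟩ := (hf.smul hγ.le).exists_subgradient (hfc.const_smul γ) z
  set y : Fin n → ℝ := fun i => l (Pi.single i 1)
  have hly : ∀ x, l x = ∑ i, x i * y i := l.apply_eq_sum_mul_apply_single
  have hmoment : γ * f z - l z + c y ≤ log (∫ ω, exp (γ * f (w ω)) ∂μ) := by
    rw [hc]
    refine add_log_integral_exp_le (hint y) hfint (ae_of_all _ fun ω => ?_)
    have := hl (w ω)
    rw [map_sub, hly (w ω)] at this
    simp only [smul_eq_mul] at this
    linarith
  have hρz : l z - c y ≤ ρ z := (hρ z).1 ⟨y, by rw [hly]⟩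
  linarith
end

section
/- For γ > 0, a convex function f, and random vector w with rate function ρ, the chain f(E[w]) ≤ (1/γ) sup_z (γ f(z) − ρ(z)) ≤ R_γ(f(w)) holds; in particular the rate-function bound is at least as strong as Jensen's inequality. -/
/-!
The first inequality is the supremum evaluated at `z = E[w]`, where `ρ` vanishes. For the second,
fix `z`, let `y` be a subgradient of `f` at `z` and put `λ = γ y`. Then
`⟪λ, w⟫ ≤ ⟪λ, z⟫ - γ f(z) + γ f(w)` pointwise, so `c(λ) ≤ ⟪λ, z⟫ - γ f(z) + log E[exp (γ f(w))]`,
and `ρ(z) ≥ ⟪λ, z⟫ - c(λ)` gives `γ f(z) - ρ(z) ≤ log E[exp (γ f(w))]`.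
-/

open MeasureTheory Real

section Subgradient

variable {E : Type*} [TopologicalSpace E] [AddCommGroup E] [Module ℝ E]
  [IsTopologicalAddGroup E] [ContinuousSMul ℝ E]

/-- Separate `(z, f z)` from the open strict epigraph; the separating functional is not vertical
because the epigraph contains `(z, f z + 1)`, so rescaling it gives a subgradient. -/
theorem ConvexOn.exists_add_le_of_continuous {f : E → ℝ} (hf : ConvexOn ℝ Set.univ f)
    (hcont : Continuous f) (z : E) : ∃ φ : StrongDual ℝ E, ∀ x, f z + φ (x - z) ≤ f x := by
  set S := {p : E × ℝ | p.1 ∈ Set.univ ∧ f p.1 < p.2}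
  have hopen : IsOpen S := by
    simpa [S] using isOpen_lt (hcont.comp continuous_fst) continuous_snd
  have hz : (z, f z) ∉ S := fun h => lt_irrefl _ h.2
  obtain ⟨L, hL⟩ := geometric_hahn_banach_open_point hf.convex_strict_epigraph hopen hz
  set b := L (0, 1)
  have hsplit : ∀ x t, L (x, t) = L (x, 0) + t * b := fun x t => by
    have : (x, t) = (x, 0) + t • ((0 : E), (1 : ℝ)) := by simp
    rw [this, map_add, map_smul, smul_eq_mul]
  have hb : b < 0 := by
    have := hL (z, f z + 1) ⟨trivial, lt_add_one _⟩
    rw [hsplit z (f z + 1), hsplit z (f z)] at this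
    linarith
  refine ⟨(-b)⁻¹ • L.comp (ContinuousLinearMap.inl ℝ E ℝ), fun x => ?_⟩
  refine le_of_forall_gt_imp_ge_of_dense fun t ht => ?_
  have := hL (x, t) ⟨trivial, ht⟩
  rw [hsplit x t, hsplit z (f z)] at this
  have hval : ((-b)⁻¹ • L.comp (ContinuousLinearMap.inl ℝ E ℝ)) (x - z)
      = (L (x, 0) - L (z, 0)) / (-b) := by
    simp [div_eq_inv_mul, ← map_sub]
  rw [hval, ← le_sub_iff_add_le', div_le_iff₀ (neg_pos.2 hb)]
  nlinarith

end Subgradient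

theorem ConvexOn.exists_add_sum_mul_le {ι : Type*} [Fintype ι] {f : (ι → ℝ) → ℝ}
    (hf : ConvexOn ℝ Set.univ f) (z : ι → ℝ) :
    ∃ y : ι → ℝ, ∀ x, f z + ∑ i, (x i - z i) * y i ≤ f x := by
  classical
  obtain ⟨φ, hφ⟩ :=
    hf.exists_add_le_of_continuous (continuousOn_univ.1 (hf.continuousOn isOpen_univ)) z
  refine ⟨fun i => φ fun j => if i = j then 1 else 0, fun x => ?_⟩
  have hsum := LinearMap.pi_apply_eq_sum_univ φ.toLinearMap (x - z)
  simp only [ContinuousLinearMap.coe_coe, smul_eq_mul, Pi.sub_apply] at hsum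
  exact hsum ▸ hφ x

theorem log_integral_exp_le_add_log_integral_exp {α : Type*} [MeasurableSpace α]
    {μ : Measure α} [NeZero μ] {X Y : α → ℝ} {a : ℝ} (hX : Integrable (fun x => exp (X x)) μ)
    (hY : Integrable (fun x => exp (Y x)) μ) (h : ∀ᵐ x ∂μ, X x ≤ a + Y x) :
    log (∫ x, exp (X x) ∂μ) ≤ a + log (∫ x, exp (Y x) ∂μ) := by
  have hmono : ∫ x, exp (X x) ∂μ ≤ exp a * ∫ x, exp (Y x) ∂μ := by
    rw [← integral_const_mul]
    refine integral_mono_ae hX (hY.const_mul _) (h.mono fun x hx => ?_)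
    simpa [← exp_add] using hx
  calc log (∫ x, exp (X x) ∂μ) ≤ log (exp a * ∫ x, exp (Y x) ∂μ) :=
        log_le_log (integral_exp_pos hX) hmono
    _ = a + log (∫ x, exp (Y x) ∂μ) := by
        rw [log_mul (exp_ne_zero a) (integral_exp_pos hY).ne', log_exp]

theorem mul_sub_le_log_integral_exp_of_convexOn {Ω ι : Type*} [MeasurableSpace Ω]
    {μ : Measure Ω} [NeZero μ] [Fintype ι] {w : Ω → ι → ℝ} {f : (ι → ℝ) → ℝ} {γ r : ℝ}
    {z : ι → ℝ} (hγ : 0 ≤ γ) (hf : ConvexOn ℝ Set.univ f)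
    (hint : ∀ y : ι → ℝ, Integrable (fun ω => exp (∑ i, w ω i * y i)) μ)
    (hfint : Integrable (fun ω => exp (γ * f (w ω))) μ)
    (hr : ∀ y : ι → ℝ, ∑ i, z i * y i - log (∫ ω, exp (∑ i, w ω i * y i) ∂μ) ≤ r) :
    γ * f z - r ≤ log (∫ ω, exp (γ * f (w ω)) ∂μ) := by
  obtain ⟨y, hy⟩ := hf.exists_add_sum_mul_le z
  have hpt : ∀ ω, ∑ i, w ω i * (γ * y i) ≤ (∑ i, z i * (γ * y i) - γ * f z) + γ * f (w ω) := by
    intro ω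
    have := mul_le_mul_of_nonneg_left (hy (w ω)) hγ
    simp only [mul_add, Finset.mul_sum] at this
    have hlin : ∑ i, γ * ((w ω i - z i) * y i)
        = ∑ i, w ω i * (γ * y i) - ∑ i, z i * (γ * y i) := by
      rw [← Finset.sum_sub_distrib]
      exact Finset.sum_congr rfl fun i _ => by ring
    linarith
  have := log_integral_exp_le_add_log_integral_exp (hint _) hfint (ae_of_all μ hpt)
  linarith [hr fun i => γ * y i]

theorem risk_bound_chain_general {Ω : Type*} [MeasurableSpace Ω]
    (μ : Measure Ω) [IsProbabilityMeasure μ] {n : ℕ}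
    (w : Ω → Fin n → ℝ)
    (c : (Fin n → ℝ) → ℝ) (ρ : (Fin n → ℝ) → ℝ)
    (f : (Fin n → ℝ) → ℝ) (γ : ℝ) (hγ : 0 < γ)
    (hf : ConvexOn ℝ Set.univ f)
    (hint : ∀ y : Fin n → ℝ,
      Integrable (fun ω => Real.exp (∑ i, w ω i * y i)) μ)
    (hc : ∀ y, c y = Real.log (∫ ω, Real.exp (∑ i, w ω i * y i) ∂μ))
    (hρ : ∀ x, IsLUB {r : ℝ | ∃ y : Fin n → ℝ, r = ∑ i, x i * y i - c y} (ρ x))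
    (hρmean : ρ (fun i => ∫ ω, w ω i ∂μ) = 0)
    (hfint : Integrable (fun ω => Real.exp (γ * f (w ω))) μ) :
    f (fun i => ∫ ω, w ω i ∂μ)
        ≤ (1 / γ) * (⨆ z : Fin n → ℝ, (γ * f z - ρ z)) ∧
    (1 / γ) * (⨆ z : Fin n → ℝ, (γ * f z - ρ z))
        ≤ (1 / γ) * Real.log (∫ ω, Real.exp (γ * f (w ω)) ∂μ) := by
  have hle : ∀ z, γ * f z - ρ z ≤ log (∫ ω, exp (γ * f (w ω)) ∂μ) := fun z =>
    mul_sub_le_log_integral_exp_of_convexOn hγ.le hf hint hfint fun y =>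
      hc y ▸ (hρ z).1 ⟨y, rfl⟩
  have hbdd : BddAbove (Set.range fun z => γ * f z - ρ z) := ⟨_, Set.forall_mem_range.2 hle⟩
  constructor
  · have hmean := le_ciSup hbdd fun i => ∫ ω, w ω i ∂μ
    rw [hρmean, sub_zero] at hmean
    calc f (fun i => ∫ ω, w ω i ∂μ) = 1 / γ * (γ * f fun i => ∫ ω, w ω i ∂μ) := by field_simp
      _ ≤ _ := by gcongr
  · gcongr
    exact ciSup_le hle

/-- Chain of bounds: f(E[w]) ≤ (1/γ) sup_z (γ f(z) − ρ(z)) ≤ R_γ(f(w)),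
so the rate-function bound is at least as strong as Jensen's inequality. -/
theorem risk_bound_chain {Ω : Type*} [MeasurableSpace Ω]
    (μ : Measure Ω) [IsProbabilityMeasure μ] {n : ℕ}
    (w : Ω → Fin n → ℝ)
    (c : (Fin n → ℝ) → ℝ) (ρ : (Fin n → ℝ) → ℝ)
    (f : (Fin n → ℝ) → ℝ) (γ : ℝ) (hγ : 0 < γ)
    (hf : ConvexOn ℝ Set.univ f)
    (hw : ∀ i, Integrable (fun ω => w ω i) μ)
    (hint : ∀ y : Fin n → ℝ,
      Integrable (fun ω => Real.exp (∑ i, w ω i * y i)) μ)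
    (hc : ∀ y, c y = Real.log (∫ ω, Real.exp (∑ i, w ω i * y i) ∂μ))
    (hρ : ∀ x, IsLUB {r : ℝ | ∃ y : Fin n → ℝ, r = ∑ i, x i * y i - c y} (ρ x))
    (hρmean : ρ (fun i => ∫ ω, w ω i ∂μ) = 0)
    (hfint : Integrable (fun ω => Real.exp (γ * f (w ω))) μ) :
    f (fun i => ∫ ω, w ω i ∂μ)
        ≤ (1 / γ) * (⨆ z : Fin n → ℝ, (γ * f z - ρ z)) ∧
    (1 / γ) * (⨆ z : Fin n → ℝ, (γ * f z - ρ z))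
        ≤ (1 / γ) * Real.log (∫ ω, Real.exp (γ * f (w ω)) ∂μ) :=
  risk_bound_chain_general μ w c ρ f γ hγ hf hint hc hρ hρmean hfint
end

section
/- For γ < 0 and a convex function J_pr, the bound inf_w (J_pr(w) − (1/γ) ρ(w)) ≤ R_γ(J_pr(w)) holds, where the infimum is over all deterministic vectors w, and the objective of the infimum is a convex function (sum of convex J_pr and convex −(1/γ)ρ with −1/γ > 0). -/
/-!
Tilt `μ` by the density `exp (γ J_pr(w))` to a probability measure `ν` and take `w₀ = E_ν[w]`.
Jensen under `ν` gives `J_pr(w₀) ≤ m := E_ν[J_pr(w)]`, and Jensen for `exp` under `ν` (the Gibbs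
variational inequality) gives `w₀ ⬝ y - c(y) ≤ γ m - log E_μ[exp (γ J_pr(w))]` for every `y`,
hence the same bound for `ρ(w₀)`; since `-1/γ > 0` the two combine to the claim.
The integrability needed under `ν` comes from an affine minorant of `J_pr`, which dominates
`exp (γ J_pr(w))` by an exponential moment of `w`.
-/

open MeasureTheory Real

theorem convexOn_of_isLUB_range {𝕜 E β ι : Type*} [Semiring 𝕜] [PartialOrder 𝕜]
    [AddCommMonoid E] [SMul 𝕜 E] [AddCommMonoid β] [PartialOrder β] [IsOrderedAddMonoid β]
    [SMul 𝕜 β] [PosSMulMono 𝕜 β] {s : Set E} {f : ι → E → β} {φ : E → β}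
    (hs : Convex 𝕜 s) (hf : ∀ i, ConvexOn 𝕜 s (f i))
    (hφ : ∀ x ∈ s, IsLUB (Set.range fun i => f i x) (φ x)) : ConvexOn 𝕜 s φ := by
  refine ⟨hs, fun x hx z hz a b ha hb hab => (hφ _ (hs hx hz ha hb hab)).2 ?_⟩
  rintro _ ⟨i, rfl⟩
  calc f i (a • x + b • z) ≤ a • f i x + b • f i z := (hf i).2 hx hz ha hb hab
    _ ≤ a • φ x + b • φ z := by
      gcongr
      · exact (hφ x hx).1 ⟨i, rfl⟩
      · exact (hφ z hz).1 ⟨i, rfl⟩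

theorem convexOn_of_isLUB_dotProduct_sub {n : ℕ} {c φ : (Fin n → ℝ) → ℝ}
    (hφ : ∀ x, IsLUB {r | ∃ y, r = x ⬝ᵥ y - c y} (φ x)) : ConvexOn ℝ Set.univ φ := by
  refine convexOn_of_isLUB_range (f := fun y x => x ⬝ᵥ y - c y) convex_univ (fun y => ?_)
    fun x _ => ?_
  · exact (((dotProductBilin ℝ ℝ).flip y).convexOn convex_univ).sub
      (concaveOn_const (c y) convex_univ)
  · have hrange : Set.range (fun y => x ⬝ᵥ y - c y) = {r | ∃ y, r = x ⬝ᵥ y - c y} :=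
      Set.ext fun r => exists_congr fun y => eq_comm
    exact hrange ▸ hφ x

theorem ConvexOn.exists_dotProduct_add_le {n : ℕ} {J : (Fin n → ℝ) → ℝ}
    (hJ : ConvexOn ℝ Set.univ J) : ∃ (g : Fin n → ℝ) (b : ℝ), ∀ x, x ⬝ᵥ g + b ≤ J x := by
  have hcont : LowerSemicontinuousOn J Set.univ :=
    (hJ.continuousOn isOpen_univ).lowerSemicontinuousOn
  obtain ⟨l, b, hl, -⟩ := hJ.exists_affine_le_of_lt (𝕜 := ℝ) (Set.mem_univ 0)
    (sub_one_lt (J 0)) isClosed_univ hcont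
  refine ⟨fun i => l fun j => if i = j then 1 else 0, b, fun x => ?_⟩
  have := hl ⟨x, trivial⟩
  simp only [Set.domRestrict_apply, Pi.add_apply, Function.comp_apply, RCLike.re_to_real,
    Function.const_apply] at this
  have hdot : l x = x ⬝ᵥ fun i => l fun j => if i = j then 1 else 0 :=
    (l : (Fin n → ℝ) →ₗ[ℝ] ℝ).pi_apply_eq_sum_univ x
  rwa [hdot] at this

theorem abs_le_exp_add_exp_neg (u : ℝ) : |u| ≤ exp u + exp (-u) := by
  have := add_one_le_exp u
  have := add_one_le_exp (-u)
  rw [abs_le]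
  constructor <;> linarith [exp_pos u, exp_pos (-u)]

theorem abs_mul_exp_mul_le {γ : ℝ} (hγ : γ < 0) (u : ℝ) :
    |u * exp (γ * u)| ≤ exp (-1) / -γ + exp ((γ - 1) * u) := by
  rw [abs_mul, abs_of_pos (exp_pos _)]
  rcases le_or_gt 0 u with hu | hu
  · have h := mul_exp_neg_le_exp_neg_one (-γ * u)
    have : u * exp (γ * u) ≤ exp (-1) / -γ := by
      rw [le_div_iff₀ (neg_pos.2 hγ)]
      calc u * exp (γ * u) * -γ = -γ * u * exp (-(-γ * u)) := by ring_nf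
        _ ≤ exp (-1) := h
    rw [abs_of_nonneg hu]
    linarith [exp_pos ((γ - 1) * u)]
  · have h : |u| ≤ exp (-u) := by
      rw [abs_of_neg hu]; linarith [add_one_le_exp (-u)]
    have : exp (-u) * exp (γ * u) = exp ((γ - 1) * u) := by rw [← exp_add]; ring_nf
    nlinarith [exp_pos (γ * u), div_pos (exp_pos (-1)) (neg_pos.2 hγ)]

section ExpMoments

variable {Ω : Type*} [MeasurableSpace Ω] {μ : Measure Ω} {n : ℕ} {X : Ω → Fin n → ℝ}

theorem aemeasurable_of_integrable_exp_dotProduct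
    (hX : ∀ y, Integrable (fun ω => exp (X ω ⬝ᵥ y)) μ) : AEMeasurable X μ := by
  refine aemeasurable_pi_iff.2 fun i => ?_
  have := aemeasurable_of_aemeasurable_exp (hX (Pi.single i 1)).aemeasurable
  simpa only [dotProduct_single, mul_one] using this

theorem integrable_exp_dotProduct_smul
    (hX : ∀ y, Integrable (fun ω => exp (X ω ⬝ᵥ y)) μ) (y : Fin n → ℝ) :
    Integrable (fun ω => exp (X ω ⬝ᵥ y) • X ω) μ := by
  refine Integrable.of_eval fun i => ?_
  have hmeas : AEMeasurable (fun ω => exp (X ω ⬝ᵥ y) * X ω i) μ :=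
    (hX y).aemeasurable.mul ((aemeasurable_of_integrable_exp_dotProduct hX).eval i)
  refine ((hX (y + Pi.single i 1)).add (hX (y - Pi.single i 1))).mono'
    hmeas.aestronglyMeasurable (ae_of_all _ fun ω => ?_)
  have hplus : exp (X ω ⬝ᵥ (y + Pi.single i 1)) = exp (X ω ⬝ᵥ y) * exp (X ω i) := by
    rw [dotProduct_add, dotProduct_single, mul_one, exp_add]
  have hminus : exp (X ω ⬝ᵥ (y - Pi.single i 1)) = exp (X ω ⬝ᵥ y) * exp (-X ω i) := by
    rw [dotProduct_sub, dotProduct_single, mul_one, sub_eq_add_neg, exp_add]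
  simp only [Pi.add_apply, Pi.smul_apply, smul_eq_mul, norm_mul, norm_eq_abs, abs_exp]
  rw [hplus, hminus, ← mul_add]
  exact mul_le_mul_of_nonneg_left (abs_le_exp_add_exp_neg _) (exp_pos _).le

end ExpMoments

theorem integral_sub_le_log_integral_exp_sub_log_integral_exp {Ω : Type*} [MeasurableSpace Ω]
    {μ : Measure Ω} [IsProbabilityMeasure μ] {f h : Ω → ℝ}
    (hf : Integrable (fun ω => exp (f ω)) μ) (hh : Integrable (fun ω => exp (h ω)) μ)
    (hhf : Integrable (fun ω => h ω - f ω) (μ.tilted f)) :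
    ∫ ω, h ω - f ω ∂(μ.tilted f) ≤ log (∫ ω, exp (h ω) ∂μ) - log (∫ ω, exp (f ω) ∂μ) := by
  have := isProbabilityMeasure_tilted hf
  have hexp : Integrable (fun ω => exp (h ω - f ω)) (μ.tilted f) := by
    rw [integrable_tilted_iff hf]
    simpa [smul_eq_mul, ← exp_add] using hh
  have jensen := convexOn_exp.map_integral_le continuous_exp.continuousOn isClosed_univ
    (ae_of_all _ fun _ => Set.mem_univ _) hhf hexp
  rw [integral_exp_tilted] at jensen
  simp only [Pi.add_apply, add_sub_cancel] at jensen
  rw [← log_div (integral_exp_pos hh).ne' (integral_exp_pos hf).ne', le_log_iff_exp_le]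
  · exact jensen
  · exact div_pos (integral_exp_pos hh) (integral_exp_pos hf)

section AffineMinorant

variable {Ω : Type*} [MeasurableSpace Ω] {μ : Measure Ω} {n : ℕ} {X : Ω → Fin n → ℝ}
  {J : (Fin n → ℝ) → ℝ} {g : Fin n → ℝ} {b : ℝ}

theorem exp_mul_le_of_dotProduct_add_le {t : ℝ} (ht : t ≤ 0) {x : Fin n → ℝ}
    (hx : x ⬝ᵥ g + b ≤ J x) : exp (t * J x) ≤ exp (t * b) * exp (x ⬝ᵥ (t • g)) := by
  rw [← exp_add, exp_le_exp, dotProduct_smul, smul_eq_mul]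
  nlinarith

theorem integrable_exp_mul_comp_of_dotProduct_add_le
    (hX : ∀ y, Integrable (fun ω => exp (X ω ⬝ᵥ y)) μ) (hJc : Continuous J)
    (hJ : ∀ x, x ⬝ᵥ g + b ≤ J x) {t : ℝ} (ht : t ≤ 0) :
    Integrable (fun ω => exp (t * J (X ω))) μ := by
  have hJX : AEMeasurable (fun ω => J (X ω)) μ :=
    hJc.measurable.comp_aemeasurable (aemeasurable_of_integrable_exp_dotProduct hX)
  refine ((hX (t • g)).const_mul (exp (t * b))).mono'
    (hJX.const_mul t).exp.aestronglyMeasurable (ae_of_all _ fun ω => ?_)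
  rw [norm_of_nonneg (exp_pos _).le]
  exact exp_mul_le_of_dotProduct_add_le ht (hJ (X ω))

theorem integrable_tilted_of_dotProduct_add_le
    (hX : ∀ y, Integrable (fun ω => exp (X ω ⬝ᵥ y)) μ) (hJc : Continuous J)
    (hJ : ∀ x, x ⬝ᵥ g + b ≤ J x) {γ : ℝ} (hγ : γ < 0) :
    Integrable X (μ.tilted fun ω => γ * J (X ω)) := by
  have hJX : AEMeasurable (fun ω => J (X ω)) μ :=
    hJc.measurable.comp_aemeasurable (aemeasurable_of_integrable_exp_dotProduct hX)
  rw [integrable_tilted_iff (integrable_exp_mul_comp_of_dotProduct_add_le hX hJc hJ hγ.le)]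
  refine ((integrable_exp_dotProduct_smul hX (γ • g)).norm.const_mul (exp (γ * b))).mono'
    ((hJX.const_mul γ).exp.smul
      (aemeasurable_of_integrable_exp_dotProduct hX)).aestronglyMeasurable
    (ae_of_all _ fun ω => ?_)
  rw [norm_smul, norm_smul, norm_of_nonneg (exp_pos _).le, norm_of_nonneg (exp_pos _).le,
    ← mul_assoc]
  exact mul_le_mul_of_nonneg_right (exp_mul_le_of_dotProduct_add_le hγ.le (hJ (X ω)))
    (norm_nonneg _)

theorem integrable_comp_tilted_of_dotProduct_add_le [IsFiniteMeasure μ]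
    (hX : ∀ y, Integrable (fun ω => exp (X ω ⬝ᵥ y)) μ) (hJc : Continuous J)
    (hJ : ∀ x, x ⬝ᵥ g + b ≤ J x) {γ : ℝ} (hγ : γ < 0) :
    Integrable (fun ω => J (X ω)) (μ.tilted fun ω => γ * J (X ω)) := by
  have hJX : AEMeasurable (fun ω => J (X ω)) μ :=
    hJc.measurable.comp_aemeasurable (aemeasurable_of_integrable_exp_dotProduct hX)
  rw [integrable_tilted_iff (integrable_exp_mul_comp_of_dotProduct_add_le hX hJc hJ hγ.le)]
  refine ((integrable_const (exp (-1) / -γ)).add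
    (integrable_exp_mul_comp_of_dotProduct_add_le hX hJc hJ (t := γ - 1) (by linarith))).mono'
    (((hJX.const_mul γ).exp).mul hJX).aestronglyMeasurable (ae_of_all _ fun ω => ?_)
  rw [smul_eq_mul, mul_comm, norm_eq_abs]
  exact abs_mul_exp_mul_le hγ _

end AffineMinorant

section DotProduct

variable {Ω : Type*} [MeasurableSpace Ω] {μ : Measure Ω} {n : ℕ} {X : Ω → Fin n → ℝ}

theorem MeasureTheory.Integrable.dotProduct_const (hX : Integrable X μ) (y : Fin n → ℝ) :
    Integrable (fun ω => X ω ⬝ᵥ y) μ :=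
  integrable_finsetSum _ fun i _ => (hX.eval i).mul_const (y i)

theorem integral_dotProduct (hX : Integrable X μ) (y : Fin n → ℝ) :
    ∫ ω, X ω ⬝ᵥ y ∂μ = (∫ ω, X ω ∂μ) ⬝ᵥ y := by
  simp only [dotProduct]
  rw [integral_finsetSum _ fun i _ => (hX.eval i).mul_const (y i)]
  simp only [integral_mul_const, eval_integral hX.eval]

theorem integral_tilted_dotProduct_sub_log_integral_exp_le [IsProbabilityMeasure μ]
    {f : Ω → ℝ} (hf : Integrable (fun ω => exp (f ω)) μ) (hX : Integrable X (μ.tilted f))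
    (hfν : Integrable f (μ.tilted f)) {y : Fin n → ℝ}
    (hy : Integrable (fun ω => exp (X ω ⬝ᵥ y)) μ) :
    (∫ ω, X ω ∂(μ.tilted f)) ⬝ᵥ y - log (∫ ω, exp (X ω ⬝ᵥ y) ∂μ)
      ≤ ∫ ω, f ω ∂(μ.tilted f) - log (∫ ω, exp (f ω) ∂μ) := by
  have h := integral_sub_le_log_integral_exp_sub_log_integral_exp hf hy
    ((hX.dotProduct_const y).sub hfν)
  rw [integral_sub (hX.dotProduct_const y) hfν, integral_dotProduct hX] at h
  linarith

end DotProduct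

theorem prescient_bound_risk_seeking_general {Ω : Type*} [MeasurableSpace Ω]
    (μ : Measure Ω) [IsProbabilityMeasure μ] {n : ℕ}
    (w : Ω → Fin n → ℝ)
    (c : (Fin n → ℝ) → ℝ) (ρ : (Fin n → ℝ) → ℝ)
    (Jpr : (Fin n → ℝ) → ℝ) (γ : ℝ) (hγ : γ < 0)
    (hJ : ConvexOn ℝ Set.univ Jpr)
    (hint : ∀ y : Fin n → ℝ,
      Integrable (fun ω => Real.exp (∑ i, w ω i * y i)) μ)
    (hc : ∀ y, c y = Real.log (∫ ω, Real.exp (∑ i, w ω i * y i) ∂μ))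
    (hρ : ∀ x, IsLUB {r : ℝ | ∃ y : Fin n → ℝ, r = ∑ i, x i * y i - c y} (ρ x)) :
    (⨅ w₀ : Fin n → ℝ, ((Jpr w₀ - (1 / γ) * ρ w₀ : ℝ) : EReal))
        ≤ (((1 / γ) * Real.log (∫ ω, Real.exp (γ * Jpr (w ω)) ∂μ) : ℝ) : EReal) ∧
    ConvexOn ℝ Set.univ (fun w₀ => Jpr w₀ - (1 / γ) * ρ w₀) := by
  have hγinv : 1 / γ < 0 := one_div_neg.2 hγ
  have hρconv := convexOn_of_isLUB_dotProduct_sub hρ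
  refine ⟨?_, (hJ.add (hρconv.smul (neg_nonneg.2 hγinv.le))).congr fun x _ => by
    simp only [Pi.add_apply, smul_eq_mul]; ring⟩
  have hJc : Continuous Jpr := continuousOn_univ.1 (hJ.continuousOn isOpen_univ)
  obtain ⟨g, b, hgb⟩ := hJ.exists_dotProduct_add_le
  have hexp := integrable_exp_mul_comp_of_dotProduct_add_le hint hJc hgb hγ.le
  set ν := μ.tilted fun ω => γ * Jpr (w ω)
  have : IsProbabilityMeasure ν := isProbabilityMeasure_tilted hexp
  have hwν : Integrable w ν := integrable_tilted_of_dotProduct_add_le hint hJc hgb hγ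
  have hJν : Integrable (fun ω => Jpr (w ω)) ν :=
    integrable_comp_tilted_of_dotProduct_add_le hint hJc hgb hγ
  set w₀ := ∫ ω, w ω ∂ν
  set m := ∫ ω, Jpr (w ω) ∂ν
  set A := ∫ ω, exp (γ * Jpr (w ω)) ∂μ
  have hjensen : Jpr w₀ ≤ m :=
    hJ.map_integral_le hJc.continuousOn isClosed_univ (ae_of_all _ fun _ => trivial) hwν hJν
  have hρw₀ : ρ w₀ ≤ γ * m - log A := by
    refine (hρ w₀).2 ?_
    rintro _ ⟨y, rfl⟩
    have hgibbs := integral_tilted_dotProduct_sub_log_integral_exp_le hexp hwν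
      (hJν.const_mul γ) (hint y)
    rw [integral_const_mul] at hgibbs
    rw [hc y]
    exact hgibbs
  refine iInf_le_of_le w₀ (EReal.coe_le_coe_iff.2 ?_)
  calc Jpr w₀ - 1 / γ * ρ w₀ ≤ m - 1 / γ * (γ * m - log A) :=
        sub_le_sub hjensen (mul_le_mul_of_nonpos_left hρw₀ hγinv.le)
    _ = 1 / γ * log A := by field_simp [hγ.ne]; ring

/-- For γ < 0: inf_w (J_pr(w) − (1/γ) ρ(w)) ≤ R_γ(J_pr(w)), and the
objective of the infimum is convex. -/
theorem prescient_bound_risk_seeking {Ω : Type*} [MeasurableSpace Ω]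
    (μ : Measure Ω) [IsProbabilityMeasure μ] {n : ℕ}
    (w : Ω → Fin n → ℝ)
    (c : (Fin n → ℝ) → ℝ) (ρ : (Fin n → ℝ) → ℝ)
    (Jpr : (Fin n → ℝ) → ℝ) (γ : ℝ) (hγ : γ < 0)
    (hJ : ConvexOn ℝ Set.univ Jpr)
    (hint : ∀ y : Fin n → ℝ,
      Integrable (fun ω => Real.exp (∑ i, w ω i * y i)) μ)
    (hc : ∀ y, c y = Real.log (∫ ω, Real.exp (∑ i, w ω i * y i) ∂μ))
    (hρ : ∀ x, IsLUB {r : ℝ | ∃ y : Fin n → ℝ, r = ∑ i, x i * y i - c y} (ρ x))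
    (hJint : Integrable (fun ω => Real.exp (γ * Jpr (w ω))) μ) :
    (⨅ w₀ : Fin n → ℝ, ((Jpr w₀ - (1 / γ) * ρ w₀ : ℝ) : EReal))
        ≤ (((1 / γ) * Real.log (∫ ω, Real.exp (γ * Jpr (w ω)) ∂μ) : ℝ) : EReal) ∧
    ConvexOn ℝ Set.univ (fun w₀ => Jpr w₀ - (1 / γ) * ρ w₀) :=
  prescient_bound_risk_seeking_general μ w c ρ Jpr γ hγ hJ hint hc hρ
end
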